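/- arXiv:2301.02644 — 3 statements merged into one kernel-verified Lean document; each statement's English description precedes it below -/
import Mathlib

section
/- Let k be a field and d ≥ 0. Consider the k-algebra homomorphism f_1 : k[a_1,…,a_{d+1}, b_1,…,b_{d+1}] → k[a_1,…,a_d, c′, b_1,…,b_{d+1}] sending b_i ↦ b_i, a_1 ↦ −c′a_1, a_i ↦ a_{i−1} − c′a_i for 1 < i ≤ d, and a_{d+1} ↦ a_d − c′. Then k[a_1,…,a_d, c′, b_1,…,b_{d+1}], regarded as a module over k[a_1,…,a_{d+1}, b_1,…,b_{d+1}] via f_1, is free with basis (1, c′, c′^2, …, c′^d). -/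
/-!
Let `A = k[a_1,…,a_{d+1},b]` and `g = T^{d+1} + a_{d+1} T^d + ⋯ + a_1 ∈ A[T]`. Since
`f_1(a_{j+1}) = a_j - c' a_{j+1}` (with `a_0 = 0` and `a_{d+1} = 1` on the target side), `f_1(g)`
telescopes to `0` at `c'`, so `f_1` extends to `A[T]/(g) → k[a,c',b]` with `T ↦ c'`. This map is an
isomorphism: its inverse sends `c' ↦ T`, `b_i ↦ b_i` and
`a_m ↦ T^{d+1-m} + a_{d+1} T^{d-m} + ⋯ + a_{m+1}`, the only choice compatible with
`a_{m-1} = f_1(a_m) + c' a_m` and `a_{d+1} = 1`. As `g` is monic of degree `d + 1`, `A[T]/(g)` is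
free over `A` with basis `1, T, …, T^d`.
-/

open MvPolynomial

/-- Variables of `A_{d+1} = k[a_1,…,a_{d+1}, b_1,…,b_{d+1}]`:
`Sum.inl p` is `a_{p+1}`, `Sum.inr p` is `b_{p+1}`. -/
abbrev AVar (d : ℕ) : Type := Fin (d + 1) ⊕ Fin (d + 1)

/-- Variables of `k[a_1,…,a_d, c', b_1,…,b_{d+1}]`:
`Sum.inl p` is `a_{p+1}`, `Sum.inr (Sum.inl ())` is `c'`, `Sum.inr (Sum.inr p)` is `b_{p+1}`. -/
abbrev RVar (d : ℕ) : Type := Fin d ⊕ (Unit ⊕ Fin (d + 1))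

/-- Variables of `C = k[a_1,…,a_d, c', b_1,…,b_d, c'']`:
`Sum.inl (Sum.inl p)` is `a_{p+1}`, `Sum.inl (Sum.inr ())` is `c'`,
`Sum.inr (Sum.inl p)` is `b_{p+1}`, `Sum.inr (Sum.inr ())` is `c''`. -/
abbrev CVar (d : ℕ) : Type := (Fin d ⊕ Unit) ⊕ (Fin d ⊕ Unit)

/-- Variables of `B_d = k[a_1,…,a_d, b_1,…,b_d, c]`:
`Sum.inl (Sum.inl p)` is `a_{p+1}`, `Sum.inl (Sum.inr p)` is `b_{p+1}`, `Sum.inr ()` is `c`. -/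
abbrev BVar (d : ℕ) : Type := (Fin d ⊕ Fin d) ⊕ Unit

/-- `a_m` in `k[a_1,…,a_d,c',b_1,…,b_{d+1}]` with conventions `a_0 = 0`, `a_{d+1} = 1`. -/
noncomputable def aRm (k : Type) [Field k] (d : ℕ) (m : ℕ) : MvPolynomial (RVar d) k :=
  if h : 1 ≤ m ∧ m ≤ d then X (Sum.inl (⟨m - 1, by omega⟩ : Fin d))
  else if m = d + 1 then 1 else 0

/-- `f_1 : k[a_1,…,a_{d+1},b_1,…,b_{d+1}] → k[a_1,…,a_d,c',b_1,…,b_{d+1}]`,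
`b_i ↦ b_i`, `a_1 ↦ -c'a_1`, `a_i ↦ a_{i-1} - c'a_i` (`1 < i ≤ d`), `a_{d+1} ↦ a_d - c'`. -/
noncomputable def f1 (k : Type) [Field k] (d : ℕ) :
    MvPolynomial (AVar d) k →ₐ[k] MvPolynomial (RVar d) k :=
  aeval (fun v => match v with
    | Sum.inl p => aRm k d p - X (Sum.inr (Sum.inl ())) * aRm k d ((p : ℕ) + 1)
    | Sum.inr q => X (Sum.inr (Sum.inr q)))

section HornerTail

variable {A : Type*} [CommRing A]

noncomputable def hornerTail (α : ℕ → A) : ℕ → ℕ → Polynomial A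
  | _, 0 => 1
  | i, m + 1 => Polynomial.X * hornerTail α (i + 1) m + Polynomial.C (α i)

theorem hornerTail_zero (α : ℕ → A) (i : ℕ) : hornerTail α i 0 = 1 := rfl

theorem hornerTail_succ (α : ℕ → A) (i m : ℕ) :
    hornerTail α i (m + 1) = Polynomial.X * hornerTail α (i + 1) m + Polynomial.C (α i) := rfl

theorem monic_hornerTail [Nontrivial A] (α : ℕ → A) (i m : ℕ) :
    (hornerTail α i m).Monic ∧ (hornerTail α i m).natDegree = m := by
  induction m generalizing i with
  | zero => exact ⟨Polynomial.monic_one, Polynomial.natDegree_one⟩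
  | succ m ih =>
    obtain ⟨hmonic, hdeg⟩ := ih (i + 1)
    have hX : (Polynomial.X * hornerTail α (i + 1) m).natDegree = m + 1 := by
      rw [Polynomial.natDegree_X_mul hmonic.ne_zero, hdeg]
    refine ⟨(Polynomial.monic_X.mul hmonic).add_of_left ?_, ?_⟩
    · rw [Polynomial.degree_eq_natDegree (Polynomial.monic_X.mul hmonic).ne_zero, hX]
      exact Polynomial.degree_C_le.trans_lt (by exact_mod_cast m.succ_pos)
    · rw [hornerTail_succ, Polynomial.natDegree_add_C, hX]

theorem eval₂_hornerTail {S : Type*} [CommRing S] (α : ℕ → A) {n : ℕ} (f : A →+* S) (c : S)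
    (u : ℕ → S) (hα : ∀ j < n, f (α j) = u j - c * u (j + 1)) (hu : u n = 1) {i : ℕ}
    (hi : i ≤ n) : (hornerTail α i (n - i)).eval₂ f c = u i := by
  induction hi using Nat.decreasingInduction with
  | self => rw [Nat.sub_self, hornerTail_zero, Polynomial.eval₂_one, hu]
  | of_succ j hj ih =>
    rw [show n - j = n - (j + 1) + 1 by omega, hornerTail_succ, Polynomial.eval₂_add,
      Polynomial.eval₂_mul, Polynomial.eval₂_X, Polynomial.eval₂_C, ih, hα j hj]
    ring

end HornerTail

theorem bijective_sum_mul_pow_of_bijective_lift {A S : Type*} [CommRing A] [CommRing S]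
    {g : Polynomial A} (hg : g.Monic) {n : ℕ} (hn : g.natDegree = n) (f : A →+* S) (c : S)
    (hc : g.eval₂ f c = 0) (h : Function.Bijective (AdjoinRoot.lift f c hc)) :
    Function.Bijective (fun r : Fin n → A => ∑ i, f (r i) * c ^ (i : ℕ)) := by
  subst hn
  let b : Module.Basis (Fin g.natDegree) A (AdjoinRoot g) := (AdjoinRoot.powerBasis' hg).basis
  have hb : ∀ i, b i = AdjoinRoot.root g ^ (i : ℕ) := (AdjoinRoot.powerBasis' hg).basis_eq_pow
  convert h.comp b.equivFun.symm.bijective using 1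
  funext r
  simp [Module.Basis.equivFun_symm_apply, hb, Algebra.smul_def, AdjoinRoot.algebraMap_eq]

namespace F1

variable {k : Type} [Field k] {d : ℕ}

noncomputable def cPrime (k : Type) [Field k] (d : ℕ) : MvPolynomial (RVar d) k :=
  X (Sum.inr (Sum.inl ()))

/-- `aSucc k d j = a_{j+1}`. -/
noncomputable def aSucc (k : Type) [Field k] (d : ℕ) (j : ℕ) : MvPolynomial (AVar d) k :=
  if h : j < d + 1 then X (Sum.inl ⟨j, h⟩) else 0

/-- `T^{d+1} + a_{d+1} T^d + ⋯ + a_1`, in Horner form. -/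
noncomputable def rootPoly (k : Type) [Field k] (d : ℕ) : Polynomial (MvPolynomial (AVar d) k) :=
  hornerTail (aSucc k d) 0 (d + 1)

theorem f1_aSucc {j : ℕ} (hj : j < d + 1) :
    f1 k d (aSucc k d j) = aRm k d j - cPrime k d * aRm k d (j + 1) := by
  rw [aSucc, dif_pos hj, f1, aeval_X]
  rfl

theorem aRm_zero : aRm k d 0 = 0 := by simp [aRm]

theorem aRm_top : aRm k d (d + 1) = 1 := by simp [aRm]

theorem eval₂_hornerTail_aSucc {i : ℕ} (hi : i ≤ d + 1) :
    (hornerTail (aSucc k d) i (d + 1 - i)).eval₂ (f1 k d).toRingHom (cPrime k d) = aRm k d i :=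
  eval₂_hornerTail (aSucc k d) (f1 k d).toRingHom (cPrime k d) (aRm k d)
    (fun _ => f1_aSucc) aRm_top hi

theorem eval₂_rootPoly :
    (rootPoly k d).eval₂ (f1 k d : MvPolynomial (AVar d) k →+* MvPolynomial (RVar d) k)
      (cPrime k d) = 0 :=
  (eval₂_hornerTail_aSucc (Nat.zero_le _)).trans aRm_zero

noncomputable def fromAdjoinRoot : AdjoinRoot (rootPoly k d) →ₐ[k] MvPolynomial (RVar d) k :=
  AdjoinRoot.liftAlgHom (rootPoly k d) (f1 k d) (cPrime k d) eval₂_rootPoly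

/-- `T^{d+1-m} + a_{d+1} T^{d-m} + ⋯ + a_{m+1}` modulo `g`, the preimage of `a_m`. -/
noncomputable def aRoot (k : Type) [Field k] (d : ℕ) (m : ℕ) : AdjoinRoot (rootPoly k d) :=
  AdjoinRoot.mk (rootPoly k d) (hornerTail (aSucc k d) m (d + 1 - m))

theorem aRoot_zero : aRoot k d 0 = 0 := AdjoinRoot.mk_self

theorem aRoot_top : aRoot k d (d + 1) = 1 := by
  rw [aRoot, Nat.sub_self, hornerTail_zero, map_one]

theorem aRoot_eq {m : ℕ} (hm : m ≤ d) :
    aRoot k d m = AdjoinRoot.root (rootPoly k d) * aRoot k d (m + 1) +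
      AdjoinRoot.of (rootPoly k d) (aSucc k d m) := by
  rw [aRoot, aRoot, show d + 1 - m = d + 1 - (m + 1) + 1 by omega, hornerTail_succ, map_add,
    map_mul, AdjoinRoot.mk_X, AdjoinRoot.mk_C]

theorem fromAdjoinRoot_aRoot {m : ℕ} (hm : m ≤ d + 1) :
    fromAdjoinRoot (aRoot k d m) = aRm k d m := by
  rw [fromAdjoinRoot, aRoot, AdjoinRoot.liftAlgHom_mk]
  exact eval₂_hornerTail_aSucc hm

noncomputable def toAdjoinRoot : MvPolynomial (RVar d) k →ₐ[k] AdjoinRoot (rootPoly k d) :=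
  aeval (Sum.elim (fun p => aRoot k d (p + 1))
    (Sum.elim (fun _ => AdjoinRoot.root (rootPoly k d))
      (fun q => AdjoinRoot.of (rootPoly k d) (X (Sum.inr q)))))

theorem toAdjoinRoot_cPrime : toAdjoinRoot (cPrime k d) = AdjoinRoot.root (rootPoly k d) := by
  rw [toAdjoinRoot, cPrime, aeval_X]; rfl

theorem toAdjoinRoot_aRm {m : ℕ} (hm : m ≤ d + 1) : toAdjoinRoot (aRm k d m) = aRoot k d m := by
  rcases Nat.eq_zero_or_pos m with rfl | hpos
  · rw [aRm_zero, aRoot_zero, map_zero]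
  rcases hm.eq_or_lt with rfl | hlt
  · rw [aRm_top, aRoot_top, map_one]
  rw [aRm, dif_pos ⟨hpos, by omega⟩, toAdjoinRoot, aeval_X, Sum.elim_inl]
  show aRoot k d (m - 1 + 1) = aRoot k d m
  rw [Nat.sub_add_cancel hpos]

theorem toAdjoinRoot_comp_f1 :
    toAdjoinRoot.comp (f1 k d) = AdjoinRoot.ofAlgHom k (rootPoly k d) := by
  refine MvPolynomial.algHom_ext fun v => ?_
  rcases v with p | q
  · have hp : aSucc k d p = X (Sum.inl p) := dif_pos p.isLt
    rw [AlgHom.comp_apply, ← hp, f1_aSucc p.isLt, map_sub, map_mul, toAdjoinRoot_cPrime,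
      toAdjoinRoot_aRm (by omega), toAdjoinRoot_aRm (by omega), aRoot_eq (by omega),
      AdjoinRoot.coe_ofAlgHom]
    ring
  · rw [AlgHom.comp_apply, f1, aeval_X]
    exact aeval_X _ _

theorem fromAdjoinRoot_comp_toAdjoinRoot :
    fromAdjoinRoot.comp toAdjoinRoot = AlgHom.id k (MvPolynomial (RVar d) k) := by
  refine MvPolynomial.algHom_ext fun v => ?_
  rcases v with p | _ | q
  · rw [AlgHom.comp_apply, toAdjoinRoot, aeval_X, Sum.elim_inl, fromAdjoinRoot_aRoot (by omega),
      aRm, dif_pos ⟨by omega, by omega⟩]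
    rfl
  · rw [AlgHom.comp_apply, ← cPrime, toAdjoinRoot_cPrime, fromAdjoinRoot,
      AdjoinRoot.liftAlgHom_root]
    rfl
  · rw [AlgHom.comp_apply, toAdjoinRoot, aeval_X, Sum.elim_inr, Sum.elim_inr, fromAdjoinRoot,
      AdjoinRoot.liftAlgHom_of, f1, aeval_X]
    rfl

theorem toAdjoinRoot_comp_fromAdjoinRoot :
    toAdjoinRoot.comp fromAdjoinRoot = AlgHom.id k (AdjoinRoot (rootPoly k d)) := by
  refine AdjoinRoot.algHom_ext' ?_ ?_
  · refine AlgHom.ext fun a => ?_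
    rw [AlgHom.comp_apply, AlgHom.comp_apply, AdjoinRoot.coe_ofAlgHom, fromAdjoinRoot,
      AdjoinRoot.liftAlgHom_of, ← AlgHom.comp_apply, toAdjoinRoot_comp_f1]
    rfl
  · rw [AlgHom.comp_apply, fromAdjoinRoot, AdjoinRoot.liftAlgHom_root, toAdjoinRoot_cPrime]
    rfl

end F1

/-- `k[a_1,…,a_d,c',b_1,…,b_{d+1}]` is free as a module over
`k[a_1,…,a_{d+1},b_1,…,b_{d+1}]` (acting through `f_1`) with basis `1, c', …, c'^d`:
the map `(r_0,…,r_d) ↦ ∑ f_1(r_i)·c'^i` is bijective. -/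
theorem statement5 (k : Type) [Field k] (d : ℕ) :
    Function.Bijective (fun r : Fin (d + 1) → MvPolynomial (AVar d) k =>
      ∑ i : Fin (d + 1), f1 k d (r i) * X (Sum.inr (Sum.inl ())) ^ (i : ℕ)) := by
  obtain ⟨hmonic, hdeg⟩ := monic_hornerTail (F1.aSucc k d) 0 (d + 1)
  refine bijective_sum_mul_pow_of_bijective_lift hmonic hdeg (f1 k d).toRingHom (F1.cPrime k d)
    F1.eval₂_rootPoly ?_
  exact (AlgEquiv.ofAlgHom F1.fromAdjoinRoot F1.toAdjoinRoot
    F1.fromAdjoinRoot_comp_toAdjoinRoot F1.toAdjoinRoot_comp_fromAdjoinRoot).bijective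
end

section
/- Let k be a field and d ≥ 0. Let C = k[a_1,…,a_d, c′, b_1,…,b_d, c″], regarded as a module over A_{d+1} = k[a_1,…,a_{d+1}, b_1,…,b_{d+1}] via the composite f_3 ∘ f_2 ∘ f_1, where f_1 sends b_i ↦ b_i, a_1 ↦ −c′a_1, a_i ↦ a_{i−1} − c′a_i (1 < i ≤ d), a_{d+1} ↦ a_d − c′; f_2 fixes all variables except b_{d+1} ↦ b_{d+1} + c′; and f_3 sends a_i ↦ a_i, c′ ↦ c′, b_1 ↦ −c″b_1, b_i ↦ b_{i−1} − c″b_i (1 < i ≤ d), b_{d+1} ↦ b_d − c″. Then C is a free A_{d+1}-module with basis {c′^i c″^j : 0 ≤ i, j ≤ d}. -/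
open MvPolynomial

/-- `f_2`: the automorphism of `k[a_1,…,a_d,c',b_1,…,b_{d+1}]` fixing `a_i`, `c'` and
`b_i` for `i ≤ d`, and sending `b_{d+1} ↦ b_{d+1} + c'`. -/
noncomputable def f2 (k : Type) [Field k] (d : ℕ) :
    MvPolynomial (RVar d) k →ₐ[k] MvPolynomial (RVar d) k :=
  aeval (fun v => match v with
    | Sum.inr (Sum.inr q) =>
        if (q : ℕ) = d then X (Sum.inr (Sum.inr q)) + X (Sum.inr (Sum.inl ()))
        else X (Sum.inr (Sum.inr q))
    | v => X v)

/-- `b_m` in `C = k[a_1,…,a_d,c',b_1,…,b_d,c'']` with conventions `b_0 = 0`, `b_{d+1} = 1`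
(the latter so that `b_m - c''·b_{m+1}` gives `b_d - c''` for `m = d`). -/
noncomputable def bCm (k : Type) [Field k] (d : ℕ) (m : ℕ) : MvPolynomial (CVar d) k :=
  if h : 1 ≤ m ∧ m ≤ d then X (Sum.inr (Sum.inl (⟨m - 1, by omega⟩ : Fin d)))
  else if m = d + 1 then 1 else 0

/-- `f_3 : k[a_1,…,a_d,c',b_1,…,b_{d+1}] → C`, `a_i ↦ a_i`, `c' ↦ c'`,
`b_1 ↦ -c''b_1`, `b_i ↦ b_{i-1} - c''b_i` (`1 < i ≤ d`), `b_{d+1} ↦ b_d - c''`. -/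
noncomputable def f3 (k : Type) [Field k] (d : ℕ) :
    MvPolynomial (RVar d) k →ₐ[k] MvPolynomial (CVar d) k :=
  aeval (fun v => match v with
    | Sum.inl p => X (Sum.inl (Sum.inl p))
    | Sum.inr (Sum.inl ()) => X (Sum.inl (Sum.inr ()))
    | Sum.inr (Sum.inr q) => bCm k d q - X (Sum.inr (Sum.inr ())) * bCm k d ((q : ℕ) + 1))

/-!
Write `t` for the adjoined variable (`c'` for `f₁`, `c''` for `f₃`). Both maps are instances of
one construction: with `Y(T) = T^n + y_n T^(n-1) + ⋯ + y_1`, the coefficients `x_0, …, x_n` of a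
generic monic polynomial of degree `n + 1` go to the coefficients of `(T - t) Y(T)`, all other
variables being fixed. After the triangular change of variables `y_m ↦ y_m - t y_(m+1)`, whose
inverse is `y_m ↦ y_m + t y_(m+1) + t² y_(m+2) + ⋯`, this map sends `x_1, …, x_n` to the `y`'s
and `x_0` to `-t Y(t)`, a polynomial in `t` of degree `n + 1` with leading coefficient `-1` over
the remaining variables. Division with remainder by such a polynomial shows that `1, t, …, t^n`
is a basis. Finally `f₂` is an automorphism fixing `c'`, and bases multiply along the tower
`A_(d+1) → k[a, c', b] → C`.
-/

section IsBasisVia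

variable {ι κ A A' B B' C : Type*} [Fintype ι] [Fintype κ]
  [Semiring A] [Semiring A'] [Semiring B] [Semiring B'] [Semiring C]

def IsBasisVia (f : A →+* B) (u : ι → B) : Prop :=
  Function.Bijective fun r : ι → A => ∑ i, f (r i) * u i

theorem IsBasisVia.comp_bijective {f : A →+* B} {u : ι → B} (hf : IsBasisVia f u)
    {e : A' →+* A} (he : Function.Bijective e) : IsBasisVia (f.comp e) u :=
  hf.comp (Equiv.piCongrRight fun _ : ι => Equiv.ofBijective e he).bijective

theorem IsBasisVia.bijective_comp {f : A →+* B} {u : ι → B} (hf : IsBasisVia f u)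
    {e : B →+* B'} (he : Function.Bijective e) : IsBasisVia (e.comp f) (e ∘ u) := by
  have : (fun r : ι → A => ∑ i, e.comp f (r i) * (e ∘ u) i) =
      e ∘ fun r : ι → A => ∑ i, f (r i) * u i := by
    ext r; simp
  rw [IsBasisVia, this]
  exact he.comp hf

theorem IsBasisVia.tower {f : A →+* B} {g : B →+* C} {u : ι → B} {v : κ → C}
    (hf : IsBasisVia f u) (hg : IsBasisVia g v) :
    IsBasisVia (g.comp f) fun p : ι × κ => g (u p.1) * v p.2 := by
  have : (fun r : ι × κ → A => ∑ p, g.comp f (r p) * (g (u p.1) * v p.2)) =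
      (fun s : κ → B => ∑ j, g (s j) * v j) ∘
        (fun t : κ → ι → A => fun j => ∑ i, f (t j i) * u i) ∘
        (Equiv.curry ι κ A).trans (Equiv.piComm _) := by
    ext r
    simp [Fintype.sum_prod_type, Finset.sum_mul, mul_assoc, Finset.sum_comm (γ := ι)]
  rw [IsBasisVia, this]
  exact hg.comp ((Equiv.piCongrRight fun _ => Equiv.ofBijective _ hf).bijective.comp
    (Equiv.bijective _))

end IsBasisVia

namespace Polynomial

variable {R : Type*} [CommRing R] {M : R[X]} {n : ℕ}

theorem IsMonicOfDegree.natDegree_comp (hM : M.IsMonicOfDegree n) (r : R[X]) :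
    (r.comp M).natDegree = r.natDegree * n := by
  rcases eq_or_ne r 0 with rfl | hr
  · simp
  rw [natDegree_comp_eq_of_mul_ne_zero (by simpa [hM.leadingCoeff_eq] using hr), hM.natDegree_eq]

theorem IsMonicOfDegree.leadingCoeff_comp (hM : M.IsMonicOfDegree n) (hn : n ≠ 0) (r : R[X]) :
    (r.comp M).leadingCoeff = r.leadingCoeff := by
  rw [leadingCoeff, hM.natDegree_comp, ← hM.natDegree_eq,
    coeff_comp_degree_mul_degree (hM.natDegree_eq ▸ hn), hM.leadingCoeff_eq, one_pow, mul_one]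

theorem eq_zero_of_sum_comp_mul_X_pow_eq_zero (hM : M.IsMonicOfDegree n) (hn : n ≠ 0)
    {r : Fin n → R[X]} (h : ∑ i, (r i).comp M * X ^ (i : ℕ) = 0) : r = 0 := by
  nontriviality R
  have hcomp : ∀ i, r i ≠ 0 → (r i).comp M ≠ 0 := fun i hi => by
    rw [← leadingCoeff_ne_zero, hM.leadingCoeff_comp hn]
    exact leadingCoeff_ne_zero.mpr hi
  have hdeg : ∀ i, r i ≠ 0 → ((r i).comp M * X ^ (i : ℕ)).degree =
      (((r i).natDegree * n + i : ℕ) : WithBot ℕ) := fun i hi => by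
    rw [degree_eq_natDegree (fun h0 => hcomp i hi (mul_X_pow_eq_zero h0)),
      natDegree_mul_X_pow (hp := hcomp i hi), hM.natDegree_comp]
  -- the degrees `deg (r i) * n + i` are pairwise distinct, having distinct residues mod `n`
  have hsup := degree_sum_eq_of_disjoint (fun i => (r i).comp M * X ^ (i : ℕ)) Finset.univ
    (by
      rintro i ⟨-, hi⟩ j ⟨-, hj⟩ hij hdij
      have hi' : r i ≠ 0 := fun h0 => hi (by simp [h0])
      have hj' : r j ≠ 0 := fun h0 => hj (by simp [h0])
      simp only [Function.comp_apply, hdeg i hi', hdeg j hj', Nat.cast_inj] at hdij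
      have := congrArg (· % n) hdij
      simp only [Nat.mul_add_mod_self_right, Nat.mod_eq_of_lt i.isLt, Nat.mod_eq_of_lt j.isLt]
        at this
      exact hij (Fin.ext this))
  rw [h, degree_zero, eq_comm, Finset.sup_eq_bot_iff] at hsup
  funext i
  by_contra hi
  have hbot := hsup i (Finset.mem_univ i)
  rw [hdeg i hi] at hbot
  exact WithBot.coe_ne_bot hbot

theorem exists_sum_comp_mul_X_pow_eq (hM : M.IsMonicOfDegree n) (hn : n ≠ 0) (f : R[X]) :
    ∃ r : Fin n → R[X], ∑ i, (r i).comp M * X ^ (i : ℕ) = f := by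
  nontriviality R
  induction hf : f.natDegree using Nat.strong_induction_on generalizing f with
  | _ N ih =>
  obtain ⟨s, hs⟩ : ∃ s : Fin n → R[X], ∑ i, (s i).comp M * X ^ (i : ℕ) = f /ₘ M := by
    by_cases hfn : N < n
    · refine ⟨0, ?_⟩
      rw [Finset.sum_eq_zero (by simp), eq_comm, divByMonic_eq_zero_iff hM.monic,
        degree_eq_natDegree hM.monic.ne_zero, hM.natDegree_eq]
      exact degree_le_natDegree.trans_lt (by rw [hf]; exact_mod_cast hfn)
    · exact ih _ (by rw [natDegree_divByMonic f hM.monic, hM.natDegree_eq]; omega) _ rfl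
  have hrem : (f %ₘ M).natDegree < n := hM.natDegree_eq ▸
    natDegree_modByMonic_lt f hM.monic fun h1 => hn (by simpa [h1] using hM.natDegree_eq.symm)
  refine ⟨fun i => C ((f %ₘ M).coeff i) + X * s i, ?_⟩
  calc _ = ∑ i : Fin n, C ((f %ₘ M).coeff i) * X ^ (i : ℕ) +
          M * ∑ i, (s i).comp M * X ^ (i : ℕ) := by
        simp only [add_comp, C_comp, mul_comp, X_comp, add_mul, Finset.sum_add_distrib,
          Finset.mul_sum, mul_assoc]
    _ = f %ₘ M + M * (f /ₘ M) := by
        rw [hs, Fin.sum_univ_eq_sum_range (fun i => C ((f %ₘ M).coeff i) * X ^ i),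
          ← as_sum_range_C_mul_X_pow' _ hrem]
    _ = f := modByMonic_add_div f M

theorem isBasisVia_compRingHom (hM : M.IsMonicOfDegree n) (hn : n ≠ 0) :
    IsBasisVia (compRingHom M) fun i : Fin n => (X : R[X]) ^ (i : ℕ) := by
  refine ⟨fun a b hab => ?_, fun f => exists_sum_comp_mul_X_pow_eq hM hn f⟩
  rw [← sub_eq_zero]
  refine eq_zero_of_sum_comp_mul_X_pow_eq_zero hM hn ?_
  simpa [sub_comp, sub_mul, Finset.sum_sub_distrib, sub_eq_zero] using hab

theorem isBasisVia_compRingHom_of_neg (hM : (-M).IsMonicOfDegree n) (hn : n ≠ 0) :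
    IsBasisVia (compRingHom M) fun i : Fin n => (X : R[X]) ^ (i : ℕ) := by
  have hneg : Function.Involutive (compRingHom (-X : R[X])) := fun p => by
    simp [comp_assoc]
  have : compRingHom M = (compRingHom (-M)).comp (compRingHom (-X)) := by
    refine RingHom.ext fun p => ?_
    simp [comp_assoc]
  rw [this]
  exact (isBasisVia_compRingHom hM hn).comp_bijective hneg.bijective

end Polynomial

theorem Nat.exists_fin_add_one_or_eq_or_lt {n m : ℕ} (hm : 1 ≤ m) :
    (∃ q : Fin n, m = q + 1) ∨ m = n + 1 ∨ n + 1 < m := by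
  obtain hmn | hmn | hmn := lt_trichotomy m (n + 1)
  · exact Or.inl ⟨⟨m - 1, by omega⟩, by simp; omega⟩
  · exact Or.inr (Or.inl hmn)
  · exact Or.inr (Or.inr hmn)

def finSuccSumEquiv (n : ℕ) (J : Type*) : Fin (n + 1) ⊕ J ≃ Option (Fin n ⊕ J) where
  toFun := Sum.elim (Fin.cases none fun q => some (Sum.inl q)) fun j => some (Sum.inr j)
  invFun o := o.elim (Sum.inl 0) (Sum.elim (fun q => Sum.inl q.succ) Sum.inr)
  left_inv := by
    rintro (p | j)
    · cases p using Fin.cases <;> rfl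
    · rfl
  right_inv := by rintro (_ | q | j) <;> rfl

namespace MvPolynomial

theorem isBasisVia_aeval_option_elim {R σ : Type*} [CommRing R] {P : MvPolynomial (Option σ) R}
    {n : ℕ} (hP : IsBasisVia (Polynomial.compRingHom (optionEquivLeft R σ P))
      fun i : Fin n => (Polynomial.X : Polynomial (MvPolynomial σ R)) ^ (i : ℕ)) :
    IsBasisVia (aeval (R := R) fun v : Option σ => v.elim P (X ∘ some)).toRingHom
      fun i : Fin n => X none ^ (i : ℕ) := by
  have hcomm : ((Polynomial.aeval (optionEquivLeft R σ P)).restrictScalars R).comp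
      (optionEquivLeft R σ).toAlgHom =
      (optionEquivLeft R σ).toAlgHom.comp (aeval fun v : Option σ => v.elim P (X ∘ some)) :=
    algHom_ext fun v => by
      rcases v with _ | s <;> simp [optionEquivLeft_X_none, optionEquivLeft_X_some]
  have hΦ : (fun r : Fin n → MvPolynomial (Option σ) R =>
        ∑ i, (aeval fun v : Option σ => v.elim P (X ∘ some)).toRingHom (r i) *
          X none ^ (i : ℕ)) =
      (optionEquivLeft R σ).symm ∘ (fun s : Fin n → Polynomial (MvPolynomial σ R) =>
        ∑ i, Polynomial.compRingHom (optionEquivLeft R σ P) (s i) * Polynomial.X ^ (i : ℕ)) ∘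
        fun r i => optionEquivLeft R σ (r i) := by
    funext r
    refine (optionEquivLeft R σ).injective ?_
    simp only [Function.comp_apply, AlgEquiv.apply_symm_apply, map_sum, map_mul, map_pow,
      optionEquivLeft_X_none, Polynomial.coe_compRingHom_apply, Polynomial.comp_eq_aeval,
      AlgHom.toRingHom_eq_coe, RingHom.coe_coe]
    exact Finset.sum_congr rfl fun i _ => congrArg (· * _) (DFunLike.congr_fun hcomm (r i)).symm
  rw [IsBasisVia, hΦ]
  exact (optionEquivLeft R σ).symm.bijective.comp
    (hP.comp (Equiv.piCongrRight fun _ => (optionEquivLeft R σ).toEquiv).bijective)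

section LinearFactor

variable (R : Type*) [CommRing R] (n : ℕ) (J : Type*)

noncomputable def cofactorCoeff (m : ℕ) : MvPolynomial (Option (Fin n ⊕ J)) R :=
  if h : 1 ≤ m ∧ m ≤ n then X (some (Sum.inl ⟨m - 1, by omega⟩))
  else if m = n + 1 then 1 else 0

/-- With `y_m = cofactorCoeff R n J m` (so `y_0 = 0`, `y_(n+1) = 1`) and `t = X none`, the
variable `x_p` goes to the coefficient `y_p - t y_(p+1)` of `T^p` in `(T - t) Y(T)`. -/
noncomputable def linearFactorHom :
    MvPolynomial (Fin (n + 1) ⊕ J) R →ₐ[R] MvPolynomial (Option (Fin n ⊕ J)) R :=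
  aeval <| Sum.elim
    (fun p => cofactorCoeff R n J p - X none * cofactorCoeff R n J (p + 1))
    (fun j => X (some (Sum.inr j)))

noncomputable def hornerTail (m : ℕ) : MvPolynomial (Option (Fin n ⊕ J)) R :=
  ∑ j ∈ Finset.range (n + 2), X none ^ j * cofactorCoeff R n J (m + j)

noncomputable def cofactorShift :
    MvPolynomial (Option (Fin n ⊕ J)) R →ₐ[R] MvPolynomial (Option (Fin n ⊕ J)) R :=
  aeval fun v => v.elim (X none) <| Sum.elim
    (fun q => cofactorCoeff R n J (q + 1) - X none * cofactorCoeff R n J (q + 2))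
    (fun j => X (some (Sum.inr j)))

noncomputable def cofactorUnshift :
    MvPolynomial (Option (Fin n ⊕ J)) R →ₐ[R] MvPolynomial (Option (Fin n ⊕ J)) R :=
  aeval fun v => v.elim (X none) <| Sum.elim
    (fun q => hornerTail R n J (q + 1)) (fun j => X (some (Sum.inr j)))

variable {R n J}

theorem cofactorCoeff_succ (q : Fin n) :
    cofactorCoeff R n J (q + 1) = X (some (Sum.inl q)) := by
  simp [cofactorCoeff]

theorem cofactorCoeff_zero : cofactorCoeff R n J 0 = 0 := by
  simp [cofactorCoeff]

theorem cofactorCoeff_top : cofactorCoeff R n J (n + 1) = 1 := by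
  simp [cofactorCoeff]

theorem cofactorCoeff_of_lt {m : ℕ} (hm : n + 1 < m) : cofactorCoeff R n J m = 0 := by
  rw [cofactorCoeff, dif_neg (by omega), if_neg (by omega)]

theorem hornerTail_of_lt {m : ℕ} (hm : n + 1 < m) : hornerTail R n J m = 0 :=
  Finset.sum_eq_zero fun j _ => by rw [cofactorCoeff_of_lt (by omega), mul_zero]

theorem hornerTail_eq (m : ℕ) :
    hornerTail R n J m = cofactorCoeff R n J m + X none * hornerTail R n J (m + 1) := by
  rw [hornerTail, hornerTail, Finset.mul_sum,
    Finset.sum_range_succ' (fun j => X none ^ j * cofactorCoeff R n J (m + j)) (n + 1),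
    Finset.sum_range_succ _ (n + 1), cofactorCoeff_of_lt (m := m + 1 + (n + 1)) (by omega),
    mul_zero, mul_zero, add_zero, pow_zero, one_mul, add_zero, add_comm]
  congr 1
  refine Finset.sum_congr rfl fun j _ => ?_
  rw [pow_succ', mul_assoc, add_assoc, add_comm 1 j]

theorem cofactorShift_X_none : cofactorShift R n J (X none) = X none := by
  simp [cofactorShift]

theorem cofactorUnshift_X_none : cofactorUnshift R n J (X none) = X none := by
  simp [cofactorUnshift]

theorem cofactorShift_cofactorCoeff {m : ℕ} (hm : 1 ≤ m) :
    cofactorShift R n J (cofactorCoeff R n J m) =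
      cofactorCoeff R n J m - X none * cofactorCoeff R n J (m + 1) := by
  obtain ⟨q, rfl⟩ | rfl | hlt := Nat.exists_fin_add_one_or_eq_or_lt (n := n) hm
  · simp [cofactorCoeff_succ, cofactorShift, add_assoc]
  · simp [cofactorCoeff_top, cofactorCoeff_of_lt]
  · simp [cofactorCoeff_of_lt hlt, cofactorCoeff_of_lt (n := n) (m := m + 1) (by omega)]

theorem cofactorUnshift_cofactorCoeff {m : ℕ} (hm : 1 ≤ m) :
    cofactorUnshift R n J (cofactorCoeff R n J m) = hornerTail R n J m := by
  obtain ⟨q, rfl⟩ | rfl | hlt := Nat.exists_fin_add_one_or_eq_or_lt (n := n) hm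
  · simp [cofactorCoeff_succ, cofactorUnshift]
  · simp [cofactorCoeff_top, hornerTail_eq (n + 1), hornerTail_of_lt]
  · simp [cofactorCoeff_of_lt hlt, hornerTail_of_lt hlt]

theorem cofactorShift_hornerTail {m : ℕ} (hm : 1 ≤ m) :
    cofactorShift R n J (hornerTail R n J m) = cofactorCoeff R n J m := by
  have hterm : ∀ j, cofactorShift R n J (X none ^ j * cofactorCoeff R n J (m + j)) =
      X none ^ j * cofactorCoeff R n J (m + j) -
        X none ^ (j + 1) * cofactorCoeff R n J (m + (j + 1)) := fun j => by
    rw [map_mul, map_pow, cofactorShift_X_none, cofactorShift_cofactorCoeff (by omega), add_assoc]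
    ring
  rw [hornerTail, map_sum, Finset.sum_congr rfl fun j _ => hterm j, Finset.sum_range_sub',
    cofactorCoeff_of_lt (m := m + (n + 2)) (by omega)]
  simp

theorem cofactorShift_comp_cofactorUnshift :
    (cofactorShift R n J).comp (cofactorUnshift R n J) = AlgHom.id R _ := by
  refine algHom_ext fun v => ?_
  rcases v with _ | q | j
  · simp [cofactorUnshift, cofactorShift]
  · simp [cofactorUnshift, cofactorShift_hornerTail, cofactorCoeff_succ]
  · simp [cofactorUnshift, cofactorShift]

theorem cofactorUnshift_comp_cofactorShift :
    (cofactorUnshift R n J).comp (cofactorShift R n J) = AlgHom.id R _ := by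
  refine algHom_ext fun v => ?_
  rcases v with _ | q | j
  · simp [cofactorUnshift, cofactorShift]
  · rw [AlgHom.comp_apply, cofactorShift, aeval_X]
    simp only [Option.elim_some, Sum.elim_inl, map_sub, map_mul]
    rw [cofactorUnshift_X_none, cofactorUnshift_cofactorCoeff (by omega),
      cofactorUnshift_cofactorCoeff (by omega), hornerTail_eq (q + 1 : ℕ), add_sub_cancel_right,
      cofactorCoeff_succ, AlgHom.id_apply]
  · simp [cofactorUnshift, cofactorShift]

variable (R n J) in
noncomputable def cofactorShiftEquiv :
    MvPolynomial (Option (Fin n ⊕ J)) R ≃ₐ[R] MvPolynomial (Option (Fin n ⊕ J)) R :=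
  AlgEquiv.ofAlgHom _ _ cofactorShift_comp_cofactorUnshift cofactorUnshift_comp_cofactorShift

theorem hornerTail_one : hornerTail R n J 1 =
    X none ^ n + ∑ j : Fin n, X (some (Sum.inl j)) * X none ^ (j : ℕ) := by
  rw [hornerTail, Finset.sum_range_succ, Finset.sum_range_succ, Finset.sum_range,
    add_comm 1 n, cofactorCoeff_top, cofactorCoeff_of_lt (m := 1 + (n + 1)) (by omega)]
  simp only [mul_one, mul_zero, add_zero, add_comm 1, cofactorCoeff_succ]
  exact add_comm _ _ |>.trans (congrArg _ (Finset.sum_congr rfl fun j _ => mul_comm _ _))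

theorem linearFactorHom_eq : linearFactorHom R n J = (cofactorShift R n J).comp
    ((aeval fun v => v.elim (-(X none * hornerTail R n J 1)) (X ∘ some)).comp
      (rename (finSuccSumEquiv n J))) := by
  refine algHom_ext fun v => ?_
  rcases v with p | j
  · cases p using Fin.cases with
    | zero => simp [linearFactorHom, finSuccSumEquiv, cofactorShift_hornerTail,
        cofactorShift_X_none, cofactorCoeff_zero]
    | succ q => simp [linearFactorHom, finSuccSumEquiv, cofactorShift, cofactorCoeff_succ,
        add_assoc]
  · simp [linearFactorHom, finSuccSumEquiv, cofactorShift]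

variable [Nontrivial R]

theorem isMonicOfDegree_optionEquivLeft_X_none_mul_hornerTail_one :
    (optionEquivLeft R (Fin n ⊕ J) (X none * hornerTail R n J 1)).IsMonicOfDegree (n + 1) := by
  have hsum := Polynomial.degree_sum_fin_lt fun j : Fin n =>
    (X (Sum.inl j) : MvPolynomial (Fin n ⊕ J) R)
  rw [hornerTail_one, map_mul, map_add, map_sum, add_comm n]
  simp only [map_mul, map_pow, optionEquivLeft_X_none, optionEquivLeft_X_some]
  refine (Polynomial.isMonicOfDegree_X _).mul ⟨?_, Polynomial.monic_X_pow_add hsum⟩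
  rw [Polynomial.natDegree_add_eq_left_of_degree_lt (by rwa [Polynomial.degree_X_pow]),
    Polynomial.natDegree_X_pow]

theorem isBasisVia_linearFactorHom :
    IsBasisVia (linearFactorHom R n J).toRingHom fun i : Fin (n + 1) => X none ^ (i : ℕ) := by
  have hsubst := isBasisVia_aeval_option_elim (P := -(X none * hornerTail R n J 1))
    (Polynomial.isBasisVia_compRingHom_of_neg (by
      simpa using isMonicOfDegree_optionEquivLeft_X_none_mul_hornerTail_one) n.succ_ne_zero)
  convert (hsubst.comp_bijective (renameEquiv R (finSuccSumEquiv n J)).bijective).bijective_comp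
    (cofactorShiftEquiv R n J).bijective using 1
  · rw [linearFactorHom_eq]
    rfl
  · funext i
    simp [cofactorShift_X_none]

end LinearFactor

end MvPolynomial

section

variable (k : Type) [Field k] (d : ℕ)

/- For `f₁` the roles are `t = c'`, `y = a`, passive variables `b`; for `f₃` they are
`t = c''`, `y = b`, passive variables `a, c'`. -/

def optionEquivRVar : Option (Fin d ⊕ Fin (d + 1)) ≃ RVar d where
  toFun o := o.elim (Sum.inr (Sum.inl ())) (Sum.elim Sum.inl (Sum.inr ∘ Sum.inr))
  invFun := Sum.elim (some ∘ Sum.inl) (Sum.elim (fun _ => none) (some ∘ Sum.inr))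
  left_inv := by rintro (_ | p | q) <;> rfl
  right_inv := by rintro (p | _ | q) <;> rfl

def optionEquivCVar : Option (Fin d ⊕ (Fin d ⊕ Unit)) ≃ CVar d where
  toFun o := o.elim (Sum.inr (Sum.inr ())) (Sum.elim (Sum.inr ∘ Sum.inl) Sum.inl)
  invFun := Sum.elim (some ∘ Sum.inr) (Sum.elim (some ∘ Sum.inl) fun _ => none)
  left_inv := by rintro (_ | q | v) <;> rfl
  right_inv := by rintro (v | q | _) <;> rfl

def rVarEquiv : RVar d ≃ Fin (d + 1) ⊕ (Fin d ⊕ Unit) where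
  toFun := Sum.elim (Sum.inr ∘ Sum.inl) (Sum.elim (Sum.inr ∘ Sum.inr) Sum.inl)
  invFun := Sum.elim (Sum.inr ∘ Sum.inr) (Sum.elim Sum.inl (Sum.inr ∘ Sum.inl))
  left_inv := by rintro (p | _ | q) <;> rfl
  right_inv := by rintro (q | p | _) <;> rfl

theorem rename_cofactorCoeff_eq_aRm (m : ℕ) :
    rename (optionEquivRVar d) (cofactorCoeff k d (Fin (d + 1)) m) = aRm k d m := by
  unfold cofactorCoeff aRm
  split_ifs <;> simp [optionEquivRVar]

theorem rename_cofactorCoeff_eq_bCm (m : ℕ) :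
    rename (optionEquivCVar d) (cofactorCoeff k d (Fin d ⊕ Unit) m) = bCm k d m := by
  unfold cofactorCoeff bCm
  split_ifs <;> simp [optionEquivCVar]

theorem f1_eq :
    f1 k d = (rename (optionEquivRVar d)).comp (linearFactorHom k d (Fin (d + 1))) := by
  refine algHom_ext fun v => ?_
  rcases v with p | q
  · simp only [f1, linearFactorHom, AlgHom.comp_apply, aeval_X, Sum.elim_inl, map_sub, map_mul,
      rename_X, rename_cofactorCoeff_eq_aRm]
    rfl
  · simp [f1, linearFactorHom, optionEquivRVar]

theorem f3_eq : f3 k d = (rename (optionEquivCVar d)).comp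
    ((linearFactorHom k d (Fin d ⊕ Unit)).comp (rename (rVarEquiv d))) := by
  refine algHom_ext fun v => ?_
  rcases v with p | _ | q
  · simp [f3, linearFactorHom, rVarEquiv, optionEquivCVar]
  · simp [f3, linearFactorHom, rVarEquiv, optionEquivCVar]
  · simp only [f3, linearFactorHom, AlgHom.comp_apply, aeval_X, rename_X,
      show rVarEquiv d (Sum.inr (Sum.inr q)) = Sum.inl q from rfl, Sum.elim_inl, map_sub, map_mul,
      rename_cofactorCoeff_eq_bCm]
    rfl

theorem f2_bijective : Function.Bijective (f2 k d) := by
  let g : MvPolynomial (RVar d) k →ₐ[k] MvPolynomial (RVar d) k := aeval fun v => match v with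
    | Sum.inr (Sum.inr q) => if (q : ℕ) = d then X v - X (Sum.inr (Sum.inl ())) else X v
    | v => X v
  refine (AlgEquiv.ofAlgHom (f2 k d) g ?_ ?_).bijective
  all_goals
    refine algHom_ext fun v => ?_
    rcases v with p | _ | q
    · simp [f2, g]
    · simp [f2, g]
    · by_cases h : (q : ℕ) = d <;> simp [f2, g, h]

theorem isBasisVia_f1 :
    IsBasisVia (f1 k d).toRingHom fun i : Fin (d + 1) => X (Sum.inr (Sum.inl ())) ^ (i : ℕ) := by
  convert isBasisVia_linearFactorHom.bijective_comp
    (renameEquiv k (optionEquivRVar d)).bijective using 1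
  · rw [f1_eq]
    rfl
  · funext i
    simp [optionEquivRVar]

theorem isBasisVia_f3 :
    IsBasisVia (f3 k d).toRingHom fun j : Fin (d + 1) => X (Sum.inr (Sum.inr ())) ^ (j : ℕ) := by
  convert (isBasisVia_linearFactorHom.comp_bijective
    (renameEquiv k (rVarEquiv d)).bijective).bijective_comp
    (renameEquiv k (optionEquivCVar d)).bijective using 1
  · rw [f3_eq]
    rfl
  · funext i
    simp [optionEquivCVar]

end

/-- `C` is free as a module over `A_{d+1}` (acting through
`f_3 ∘ f_2 ∘ f_1`) with basis `{c'^i c''^j : 0 ≤ i,j ≤ d}`: the map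
`(r_{ij}) ↦ ∑ (f_3∘f_2∘f_1)(r_{ij})·c'^i·c''^j` is bijective. -/
theorem statement7 (k : Type) [Field k] (d : ℕ) :
    Function.Bijective
      (fun r : Fin (d + 1) × Fin (d + 1) → MvPolynomial (AVar d) k =>
        ∑ p : Fin (d + 1) × Fin (d + 1),
          ((f3 k d).comp ((f2 k d).comp (f1 k d))) (r p) *
            X (Sum.inl (Sum.inr ())) ^ (p.1 : ℕ) *
            X (Sum.inr (Sum.inr ())) ^ (p.2 : ℕ)) := by
  have h := ((isBasisVia_f1 k d).bijective_comp (f2_bijective k d)).tower (isBasisVia_f3 k d)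
  unfold IsBasisVia at h
  convert h using 2 with r
  refine Finset.sum_congr rfl fun p _ => ?_
  simp [f2, f3, mul_assoc]
end

section
/- Let k be a field and d ≥ 0. Regard B_d as an A_{d+1}-module via f. Then there exists an injective A_{d+1}-module homomorphism θ : A_{d+1}^{d+1} → A_{d+1}^{d+1} whose cokernel is isomorphic to B_d as an A_{d+1}-module; i.e., B_d admits a free resolution 0 → A_{d+1}^{d+1} → A_{d+1}^{d+1} → B_d → 0 by free modules of rank d+1. -/
open MvPolynomial

/-- `f_4 : C → B_d`, `a_i ↦ a_i`, `b_i ↦ b_i`, `c' ↦ c`, `c'' ↦ c`. -/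
noncomputable def f4 (k : Type) [Field k] (d : ℕ) :
    MvPolynomial (CVar d) k →ₐ[k] MvPolynomial (BVar d) k :=
  aeval (fun v => match v with
    | Sum.inl (Sum.inl p) => X (Sum.inl (Sum.inl p))
    | Sum.inl (Sum.inr ()) => X (Sum.inr ())
    | Sum.inr (Sum.inl p) => X (Sum.inl (Sum.inr p))
    | Sum.inr (Sum.inr ()) => X (Sum.inr ()))

/-- `a_m` in `B_d` with conventions `a_0 = 0`, `a_{d+1} = 1`. -/
noncomputable def aBm (k : Type) [Field k] (d : ℕ) (m : ℕ) : MvPolynomial (BVar d) k :=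
  if h : 1 ≤ m ∧ m ≤ d then X (Sum.inl (Sum.inl (⟨m - 1, by omega⟩ : Fin d)))
  else if m = d + 1 then 1 else 0

/-- `b_m` in `B_d` with conventions `b_0 = 0`, `b_{d+1} = 0`. -/
noncomputable def bBm (k : Type) [Field k] (d : ℕ) (m : ℕ) : MvPolynomial (BVar d) k :=
  if h : 1 ≤ m ∧ m ≤ d then X (Sum.inl (Sum.inr (⟨m - 1, by omega⟩ : Fin d)))
  else 0

/-- `f : A_{d+1} → B_d`, `a_i ↦ a_{i-1} - c·a_i`, `b_i ↦ b_{i-1} - c·b_i`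
with `a_0 = b_0 = b_{d+1} = 0` and `a_{d+1} = 1` in `B_d`. -/
noncomputable def fmap (k : Type) [Field k] (d : ℕ) :
    MvPolynomial (AVar d) k →ₐ[k] MvPolynomial (BVar d) k :=
  aeval (fun v => match v with
    | Sum.inl p => aBm k d p - X (Sum.inr ()) * aBm k d ((p : ℕ) + 1)
    | Sum.inr q => bBm k d q - X (Sum.inr ()) * bBm k d ((q : ℕ) + 1))

/-- `B_d` as a module over `A_{d+1}` via `f`. -/
noncomputable instance moduleViaF (k : Type) [Field k] (d : ℕ) :
    Module (MvPolynomial (AVar d) k) (MvPolynomial (BVar d) k) :=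
  Module.compHom _ (fmap k d).toRingHom

/-!
Put `P(Y) = Y^{d+1} + a_{d+1}Y^d + ⋯ + a_1` and `Q(Y) = b_{d+1}Y^d + ⋯ + b_1` over
`A = A_{d+1}`. Under `f` they become `(Y - c)(Y^d + a_dY^{d-1} + ⋯ + a_1)` and
`(Y - c)(b_dY^{d-1} + ⋯ + b_1)`, and in fact `B_d ≅ A[Y]/(P, Q)`.

The ring `T = A[Y]/(P)` is free over `A` with basis `1, Y, …, Y^d`. It is also a polynomial
ring: `Y ↦ c'` together with `f_1` identifies it with `R = k[a_1,…,a_d,c',b_1,…,b_{d+1}]`, the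
inverse sending `a_i` to the Horner tail `Y^{d+1-i} + a_{d+1}Y^{d-i} + ⋯ + a_{i+1}` of `P`.
So `T` is a domain and multiplication by `Q` is injective. Its cokernel `T/(Q) ≅ R/(q)`, with
`q = b_1 + b_2c' + ⋯ + b_{d+1}c'^d`, is `B_d`: the map `ψ : R → B_d`, `b_i ↦ b_{i-1} - c b_i`,
`c' ↦ c`, kills `q`, and `b_i ↦ b_{i+1} + b_{i+2}c' + ⋯ + b_{d+1}c'^{d-i}` is a section of `ψ`
that is inverse to it modulo `q`.
-/

namespace Polynomial

variable {R S : Type*} [Semiring R]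

theorem coeff_iterate_divX (p : R[X]) (m n : ℕ) : (divX^[m] p).coeff n = p.coeff (n + m) := by
  induction m generalizing n with
  | zero => rfl
  | succ m ih => rw [Function.iterate_succ_apply', coeff_divX, ih, add_right_comm, add_assoc]

theorem iterate_divX_succ_mul_X_add (p : R[X]) (m : ℕ) :
    divX^[m + 1] p * X + C (p.coeff m) = divX^[m] p := by
  rw [Function.iterate_succ_apply', ← zero_add m, ← coeff_iterate_divX, zero_add, divX_mul_X_add]

theorem iterate_divX_natDegree (p : R[X]) : divX^[p.natDegree] p = C p.leadingCoeff := by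
  ext n
  rw [coeff_iterate_divX, coeff_C]
  split_ifs with hn
  · rw [hn, zero_add, leadingCoeff]
  · exact coeff_eq_zero_of_natDegree_lt (by omega)

theorem iterate_divX_eq_zero_of_degree_lt {p : R[X]} {m : ℕ} (hm : p.degree < m) :
    divX^[m] p = 0 := by
  ext n
  rw [coeff_iterate_divX, coeff_zero]
  exact coeff_eq_zero_of_degree_lt (hm.trans_le (by exact_mod_cast m.le_add_left n))

theorem eval₂_iterate_divX [CommSemiring S] (f : R →+* S) (x : S) (p : R[X]) (m : ℕ) :
    (divX^[m] p).eval₂ f x = f (p.coeff m) + x * (divX^[m + 1] p).eval₂ f x := by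
  rw [← iterate_divX_succ_mul_X_add, eval₂_add, eval₂_mul_X, eval₂_C, add_comm, mul_comm]

theorem eval₂_iterate_divX_of_coeff_eq [CommRing S] (f : R →+* S) (x : S) (p : R[X]) (s : ℕ → S)
    {n : ℕ} (hcoeff : ∀ m < n, f (p.coeff m) = s m - x * s (m + 1))
    (htop : (divX^[n] p).eval₂ f x = s n) {m : ℕ} (hm : m ≤ n) :
    (divX^[m] p).eval₂ f x = s m := by
  induction hm using Nat.decreasingInduction with
  | self => exact htop
  | of_succ m hm ih =>
    rw [eval₂_iterate_divX, ih, hcoeff m hm, sub_add_cancel]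

end Polynomial

theorem Module.Basis.exists_injective_quotient_range_equiv {A T M ι : Type*} [CommRing A]
    [CommRing T] [Algebra A T] [AddCommGroup M] [Module A M] [Fintype ι]
    (b : Module.Basis ι A T) {q : T} (hq : IsLeftRegular q) (g : T →ₗ[A] M)
    (hg : Function.Surjective g) (hker : ∀ t, g t = 0 ↔ q ∣ t) :
    ∃ θ : (ι → A) →ₗ[A] (ι → A),
      Function.Injective θ ∧ Nonempty (((ι → A) ⧸ LinearMap.range θ) ≃ₗ[A] M) := by
  let E := b.equivFun
  let μ := LinearMap.mulLeft A q
  have hker : LinearMap.ker g = LinearMap.range μ := by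
    ext t
    simp [μ, hker, dvd_def, eq_comm]
  have hrange : (LinearMap.range μ).map (E : T →ₗ[A] ι → A) = LinearMap.range (E.conj μ) := by
    rw [LinearEquiv.conj_apply, LinearMap.range_comp_of_range_eq_top _ E.symm.range,
      LinearMap.range_comp]
  refine ⟨E.conj μ, E.injective.comp (hq.comp E.symm.injective), ⟨?_⟩⟩
  exact (Submodule.Quotient.equiv _ _ E hrange).symm ≪≫ₗ
    Submodule.quotEquivOfEq _ _ hker.symm ≪≫ₗ g.quotKerEquivOfSurjective hg

open scoped Polynomial

namespace BdResolution

open Polynomial (divX)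

variable (k : Type) [Field k] (d : ℕ)

noncomputable def polyA : (MvPolynomial (AVar d) k)[X] :=
  Polynomial.X ^ (d + 1) + ∑ i : Fin (d + 1), Polynomial.C (X (Sum.inl i)) * Polynomial.X ^ (i : ℕ)

noncomputable def polyB : (MvPolynomial (AVar d) k)[X] :=
  ∑ i : Fin (d + 1), Polynomial.C (X (Sum.inr i)) * Polynomial.X ^ (i : ℕ)

lemma coeff_polyA (i : Fin (d + 1)) : (polyA k d).coeff i = X (Sum.inl i) := by
  simp [polyA, Polynomial.coeff_X_pow, Fin.val_inj, i.is_lt.ne]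

lemma coeff_polyB (i : Fin (d + 1)) : (polyB k d).coeff i = X (Sum.inr i) := by
  simp [polyB, Fin.val_inj]

lemma natDegree_polyA : (polyA k d).natDegree = d + 1 := by
  rw [polyA, Polynomial.natDegree_add_eq_left_of_degree_lt, Polynomial.natDegree_X_pow]
  exact (Polynomial.degree_sum_fin_lt _).trans_eq (Polynomial.degree_X_pow _).symm

lemma monic_polyA : (polyA k d).Monic :=
  Polynomial.monic_X_pow_add (Polynomial.degree_sum_fin_lt _)

lemma iterate_divX_polyA : divX^[d + 1] (polyA k d) = 1 := by
  rw [← natDegree_polyA k d, Polynomial.iterate_divX_natDegree, (monic_polyA k d).leadingCoeff,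
    map_one]

lemma iterate_divX_polyB : divX^[d + 1] (polyB k d) = 0 :=
  Polynomial.iterate_divX_eq_zero_of_degree_lt (Polynomial.degree_sum_fin_lt _)

noncomputable def cR : MvPolynomial (RVar d) k := X (Sum.inr (Sum.inl ()))

lemma aRm_zero : aRm k d 0 = 0 := by simp [aRm]

lemma aRm_last : aRm k d (d + 1) = 1 := by simp [aRm]

lemma aRm_succ (i : Fin d) : aRm k d (i + 1) = X (Sum.inl i) := by simp [aRm]

lemma f1_X_inl (i : Fin (d + 1)) :
    f1 k d (X (Sum.inl i)) = aRm k d i - cR k d * aRm k d (i + 1) := by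
  simp [f1, cR]

lemma f1_X_inr (i : Fin (d + 1)) : f1 k d (X (Sum.inr i)) = X (Sum.inr (Sum.inr i)) := by
  simp [f1]

lemma eval₂_f1_iterate_divX_polyA {m : ℕ} (hm : m ≤ d + 1) :
    (divX^[m] (polyA k d)).eval₂ (f1 k d : _ →+* _) (cR k d) = aRm k d m := by
  refine Polynomial.eval₂_iterate_divX_of_coeff_eq _ _ _ _ (fun m hm => ?_) ?_ hm
  · obtain ⟨i, rfl⟩ : ∃ i : Fin (d + 1), (i : ℕ) = m := ⟨⟨m, hm⟩, rfl⟩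
    simp [coeff_polyA, f1_X_inl]
  · rw [iterate_divX_polyA, Polynomial.eval₂_one, aRm_last]

lemma eval₂_f1_polyA : (polyA k d).eval₂ (f1 k d : _ →+* _) (cR k d) = 0 := by
  simpa [aRm_zero] using eval₂_f1_iterate_divX_polyA k d (Nat.zero_le _)

noncomputable def toR : AdjoinRoot (polyA k d) →ₐ[k] MvPolynomial (RVar d) k :=
  AdjoinRoot.liftAlgHom _ (f1 k d) (cR k d) (eval₂_f1_polyA k d)

noncomputable def ofR : MvPolynomial (RVar d) k →ₐ[k] AdjoinRoot (polyA k d) :=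
  aeval fun v => match v with
    | Sum.inl i => AdjoinRoot.mk _ (divX^[i + 1] (polyA k d))
    | Sum.inr (Sum.inl ()) => AdjoinRoot.root _
    | Sum.inr (Sum.inr i) => AdjoinRoot.of _ (X (Sum.inr i))

lemma ofR_aRm {m : ℕ} (hm : m ≤ d + 1) :
    ofR k d (aRm k d m) = AdjoinRoot.mk _ (divX^[m] (polyA k d)) := by
  rcases Nat.eq_zero_or_pos m with rfl | hpos
  · simp [aRm_zero]
  rcases hm.lt_or_eq with hlt | rfl
  · obtain ⟨i, rfl⟩ : ∃ i : Fin d, (i : ℕ) + 1 = m := ⟨⟨m - 1, by omega⟩, by simp; omega⟩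
    simp [aRm_succ, ofR]
  · simp [aRm_last, iterate_divX_polyA]

lemma ofR_f1 (a : MvPolynomial (AVar d) k) : ofR k d (f1 k d a) = AdjoinRoot.of _ a := by
  suffices (ofR k d).comp (f1 k d) = IsScalarTower.toAlgHom k _ _ from
    DFunLike.congr_fun this a
  ext (i | i)
  · rw [AlgHom.comp_apply, f1_X_inl, map_sub, map_mul, ofR_aRm k d i.is_lt.le,
      ofR_aRm k d i.is_lt, ← Polynomial.iterate_divX_succ_mul_X_add, coeff_polyA]
    simp [ofR, cR]
    ring
  · simp [f1_X_inr, ofR]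

lemma ofR_comp_toR : (ofR k d).comp (toR k d) = AlgHom.id k _ := by
  refine AdjoinRoot.algHom_ext' (AlgHom.ext fun a => ?_) ?_
  · simp [toR, ofR_f1]
  · simp [toR, ofR, cR]

lemma toR_comp_ofR : (toR k d).comp (ofR k d) = AlgHom.id k _ := by
  refine MvPolynomial.algHom_ext fun v => ?_
  rcases v with i | _ | i
  · simp only [AlgHom.comp_apply, ofR, aeval_X, toR, AdjoinRoot.liftAlgHom_mk,
      eval₂_f1_iterate_divX_polyA k d (Nat.succ_le_succ i.is_lt.le), aRm_succ, AlgHom.id_apply]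
  · simp [ofR, toR, cR]
  · simp [ofR, toR, f1_X_inr]

noncomputable def psi : MvPolynomial (RVar d) k →ₐ[k] MvPolynomial (BVar d) k :=
  aeval fun v => match v with
    | Sum.inl i => X (Sum.inl (Sum.inl i))
    | Sum.inr (Sum.inl ()) => X (Sum.inr ())
    | Sum.inr (Sum.inr i) => bBm k d i - X (Sum.inr ()) * bBm k d (i + 1)

lemma psi_aRm (m : ℕ) : psi k d (aRm k d m) = aBm k d m := by
  unfold aRm aBm
  split_ifs <;> simp [psi]

lemma psi_comp_f1 : (psi k d).comp (f1 k d) = fmap k d := by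
  refine MvPolynomial.algHom_ext fun v => ?_
  rcases v with i | i
  · rw [AlgHom.comp_apply, f1_X_inl, map_sub, map_mul, psi_aRm, psi_aRm]
    simp [fmap, cR, psi]
  · simp [f1_X_inr, fmap, psi]

noncomputable def bR (m : ℕ) : MvPolynomial (RVar d) k :=
  (divX^[m] (polyB k d)).eval₂ (f1 k d : _ →+* _) (cR k d)

noncomputable def qR : MvPolynomial (RVar d) k := bR k d 0

lemma psi_bR {m : ℕ} (hm : m ≤ d + 1) : psi k d (bR k d m) = bBm k d m := by
  have := Polynomial.hom_eval₂ (divX^[m] (polyB k d)) (f1 k d : _ →+* _)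
    (psi k d : MvPolynomial (RVar d) k →+* MvPolynomial (BVar d) k) (cR k d)
  rw [← AlgHom.comp_toRingHom, psi_comp_f1] at this
  have hc : psi k d (cR k d) = X (Sum.inr ()) := by simp [psi, cR]
  rw [RingHom.coe_coe, hc] at this
  rw [bR, this]
  refine Polynomial.eval₂_iterate_divX_of_coeff_eq _ _ _ _ (fun m hm => ?_) ?_ hm
  · obtain ⟨i, rfl⟩ : ∃ i : Fin (d + 1), (i : ℕ) = m := ⟨⟨m, hm⟩, rfl⟩
    simp [coeff_polyB, fmap]
  · simp [iterate_divX_polyB, bBm]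

noncomputable def sigma : MvPolynomial (BVar d) k →ₐ[k] MvPolynomial (RVar d) k :=
  aeval fun v => match v with
    | Sum.inl (Sum.inl i) => X (Sum.inl i)
    | Sum.inl (Sum.inr i) => bR k d (i + 1)
    | Sum.inr () => cR k d

lemma psi_comp_sigma : (psi k d).comp (sigma k d) = AlgHom.id k _ := by
  refine MvPolynomial.algHom_ext fun v => ?_
  rcases v with (i | i) | _
  · simp [sigma, psi]
  · simp [sigma, psi_bR k d (Nat.succ_le_succ i.is_lt.le), bBm]
  · simp [sigma, psi, cR]

-- Only modulo `q`: `b_0 = 0` in `B_d`, whereas `bR 0 = q`.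
lemma sigma_bBm {m : ℕ} (hm : m ≤ d + 1) :
    Ideal.Quotient.mk (Ideal.span {qR k d}) (sigma k d (bBm k d m)) =
      Ideal.Quotient.mk (Ideal.span {qR k d}) (bR k d m) := by
  rcases Nat.eq_zero_or_pos m with rfl | hpos
  · rw [show bR k d 0 = qR k d from rfl,
      Ideal.Quotient.eq_zero_iff_mem.mpr (Ideal.mem_span_singleton_self _)]
    simp [bBm]
  rcases hm.lt_or_eq with hlt | rfl
  · obtain ⟨i, rfl⟩ : ∃ i : Fin d, (i : ℕ) + 1 = m := ⟨⟨m - 1, by omega⟩, by simp; omega⟩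
    simp [bBm, sigma]
  · simp [bBm, bR, iterate_divX_polyB]

lemma mk_sigma_psi (r : MvPolynomial (RVar d) k) :
    Ideal.Quotient.mk (Ideal.span {qR k d}) (sigma k d (psi k d r)) =
      Ideal.Quotient.mk (Ideal.span {qR k d}) r := by
  let π := Ideal.Quotient.mkₐ k (Ideal.span {qR k d})
  suffices π.comp ((sigma k d).comp (psi k d)) = π from DFunLike.congr_fun this r
  refine MvPolynomial.algHom_ext fun v => ?_
  rcases v with i | _ | i
  · simp [π, sigma, psi]
  · simp [π, sigma, psi, cR]
  · have hb : bR k d i = X (Sum.inr (Sum.inr i)) + cR k d * bR k d (i + 1) := by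
      rw [bR, Polynomial.eval₂_iterate_divX, coeff_polyB, RingHom.coe_coe, f1_X_inr, bR]
    simp only [AlgHom.comp_apply, psi, aeval_X, map_sub, map_mul, Ideal.Quotient.mkₐ_eq_mk, π,
      sigma_bBm k d i.is_lt.le, sigma_bBm k d i.is_lt, hb]
    simp [sigma, cR]

lemma psi_eq_zero_iff (r : MvPolynomial (RVar d) k) : psi k d r = 0 ↔ qR k d ∣ r := by
  constructor
  · intro h
    have := mk_sigma_psi k d r
    rwa [h, map_zero, map_zero, eq_comm, Ideal.Quotient.eq_zero_iff_mem,
      Ideal.mem_span_singleton] at this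
  · rintro ⟨s, rfl⟩
    rw [map_mul, qR, psi_bR k d (Nat.zero_le _)]
    simp [bBm]

lemma qR_ne_zero : qR k d ≠ 0 := by
  have h0 := coeff_polyB k d 0
  rw [Fin.val_zero] at h0
  have hq : qR k d = X (Sum.inr (Sum.inr 0)) + cR k d * bR k d 1 := by
    rw [qR, bR, Polynomial.eval₂_iterate_divX, h0, RingHom.coe_coe, f1_X_inr, bR]
  intro h
  have := congrArg (eval fun v => if v = Sum.inr (Sum.inr 0) then (1 : k) else 0) hq
  simp [h, cR] at this

noncomputable def equivR : AdjoinRoot (polyA k d) ≃ₐ[k] MvPolynomial (RVar d) k :=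
  AlgEquiv.ofAlgHom (toR k d) (ofR k d) (toR_comp_ofR k d) (ofR_comp_toR k d)

noncomputable def qT : AdjoinRoot (polyA k d) := AdjoinRoot.mk _ (polyB k d)

lemma equivR_qT : equivR k d (qT k d) = qR k d := rfl

lemma isLeftRegular_qT : IsLeftRegular (qT k d) := fun s t hst =>
  (equivR k d).injective <| mul_left_cancel₀ (qR_ne_zero k d) <| by
    simpa only [map_mul, equivR_qT] using congrArg (equivR k d) hst

noncomputable def toB :
    AdjoinRoot (polyA k d) →ₗ[MvPolynomial (AVar d) k] MvPolynomial (BVar d) k where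
  toFun t := psi k d (equivR k d t)
  map_add' s t := by simp only [map_add]
  map_smul' a t := by
    have h : equivR k d (AdjoinRoot.of _ a) = f1 k d a := by
      simp [equivR, toR]
    rw [Algebra.smul_def, AdjoinRoot.algebraMap_eq, map_mul, map_mul, h,
      ← AlgHom.comp_apply, psi_comp_f1]
    rfl

lemma toB_surjective : Function.Surjective (toB k d) := fun b =>
  ⟨(equivR k d).symm (sigma k d b), by
    rw [toB, LinearMap.coe_mk, AddHom.coe_mk, AlgEquiv.apply_symm_apply, ← AlgHom.comp_apply,
      psi_comp_sigma, AlgHom.id_apply]⟩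

lemma toB_eq_zero_iff (t : AdjoinRoot (polyA k d)) : toB k d t = 0 ↔ qT k d ∣ t := by
  rw [toB, LinearMap.coe_mk, AddHom.coe_mk, psi_eq_zero_iff, ← equivR_qT, map_dvd_iff]

end BdResolution

/-- `B_d` admits a free resolution
`0 → A_{d+1}^{d+1} → A_{d+1}^{d+1} → B_d → 0` as an `A_{d+1}`-module (via `f`):
there is an injective `A_{d+1}`-linear map `θ` on `A_{d+1}^{d+1}` whose cokernel
is isomorphic to `B_d`. -/
theorem statement10 (k : Type) [Field k] (d : ℕ) :
    ∃ θ : (Fin (d + 1) → MvPolynomial (AVar d) k) →ₗ[MvPolynomial (AVar d) k]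
        (Fin (d + 1) → MvPolynomial (AVar d) k),
      Function.Injective θ ∧
      Nonempty (((Fin (d + 1) → MvPolynomial (AVar d) k) ⧸ LinearMap.range θ)
        ≃ₗ[MvPolynomial (AVar d) k] MvPolynomial (BVar d) k) :=
  ((AdjoinRoot.powerBasis' (BdResolution.monic_polyA k d)).basis.reindex
    (finCongr (BdResolution.natDegree_polyA k d))).exists_injective_quotient_range_equiv
    (BdResolution.isLeftRegular_qT k d) (BdResolution.toB k d) (BdResolution.toB_surjective k d)
    (BdResolution.toB_eq_zero_iff k d)
end
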